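/- arXiv:2005.13327 — 2 statements merged into one kernel-verified Lean document; each statement's English description precedes it below -/
import Mathlib

section
/- Let d = 1 and q small. The mean hitting time of the event {η(0) = 0} for the stationary FA1f process on ℤ satisfies E_μ(τ_0) ≥ C q^{−3} for some constant C > 0. -/
open Finset ENNReal

noncomputable section

/-- The configuration `η` flipped at site `x ∈ ℤ`. -/
def flipZ (η : ℤ → Bool) (x : ℤ) : ℤ → Bool :=
  fun y => if y = x then !(η y) else η y

/-- Extension of a configuration on a finite set of sites by fully occupied outside. -/
def extendZ (s : Finset ℤ) (η : ↥s → Bool) : ℤ → Bool :=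
  fun x => if h : x ∈ s then η ⟨x, h⟩ else true

/-- Expectation, under the product Bernoulli(1−q) measure (`true` = occupied, probability
`1−q`; `false` = empty, probability `q`), of a function depending only on sites in `s`. -/
def ElocZ (q : ℝ) (s : Finset ℤ) (g : (ℤ → Bool) → ℝ) : ℝ :=
  ∑ η : ↥s → Bool, (∏ v : ↥s, if η v then (1 - q) else q) * g (extendZ s η)

/-- The FA1f constraint on `ℤ` (as a real indicator): a neighbour of `x` is empty. -/
def cIndZ (η : ℤ → Bool) (x : ℤ) : ℝ :=
  if η (x - 1) = false ∨ η (x + 1) = false then 1 else 0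

/-- The FA1f Dirichlet form on `ℤ` of a function depending only on sites in `s`. -/
def DformZ (q : ℝ) (s : Finset ℤ) (f : (ℤ → Bool) → ℝ) : ℝ :=
  q * (1 - q) * ∑' x : ℤ,
    ElocZ q (s ∪ {x - 1, x, x + 1}) (fun η => cIndZ η x * (f (flipZ η x) - f η) ^ 2)

/-- `ξ(η) = inf{|x| : η(x) = 0}`, the distance from the origin to the nearest empty site. -/
def xiZ (η : ℤ → Bool) : ℕ :=
  sInf {k : ℕ | ∃ x : ℤ, x.natAbs = k ∧ η x = false}

/-- The test function `f(η) = ξ·1_{ξ<ℓ} + (2ℓ−ξ)·1_{ℓ≤ξ<2ℓ}`. -/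
def fPers (ℓ : ℕ) (η : ℤ → Bool) : ℝ :=
  if xiZ η < ℓ then (xiZ η : ℝ)
  else if xiZ η < 2 * ℓ then (2 * ℓ : ℝ) - (xiZ η : ℝ) else 0

/-- The window `{x : |x| ≤ 2ℓ}` on which `fPers ℓ` depends. -/
def windowZ (ℓ : ℕ) : Finset ℤ := Finset.Icc (-(2 * ℓ : ℤ)) (2 * ℓ : ℤ)

/-- `f` depends only on the sites in `s`. -/
def localOnZ (s : Finset ℤ) (f : (ℤ → Bool) → ℝ) : Prop :=
  ∀ η η' : ℤ → Bool, (∀ x ∈ s, η x = η' x) → f η = f η'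

/-- The mean hitting time `E_μ(τ_0)` of the event `{η(0) = 0}` for the stationary FA1f
process on `ℤ`, via the variational principle
`E_μ(τ_0) = sup{μ(f)²/D(f) : f local, f = 0 on {η(0) = 0}}`. -/
def hitTimeZ (q : ℝ) : ℝ≥0∞ :=
  sSup {r : ℝ≥0∞ | ∃ (s : Finset ℤ) (f : (ℤ → Bool) → ℝ),
    localOnZ s f ∧ (∀ η, η 0 = false → f η = 0) ∧
    r = ENNReal.ofReal (ElocZ q s f ^ 2) / ENNReal.ofReal (DformZ q s f)}

/-! Let `ξ` be the distance from the origin to the nearest vacancy and `f = tent_ℓ(ξ)`, the test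
function of the variational principle. A flip at `x` that is allowed by the FA1f constraint leaves
a vacancy next to `x`, so it changes `ξ`, hence `f`, by at most one; a flip outside the window
`|x| ≤ 2ℓ` does not change `f` at all. Each of the `4ℓ + 1` sites of the window therefore
contributes at most `q (1 - q) · 2q` to the Dirichlet form, and `D(f) ≤ 2q²(4ℓ + 1)`.

On the other hand `f ≥ m + 1` as soon as the sites `|x| ≤ m` are occupied but some site `|x| ≤ ℓ`
is empty, so `μ(f) ≥ (m + 1) ((1-q)^(2m+1) - (1-q)^(2ℓ+1))`. For `m = ⌈1/(4q)⌉` and `ℓ = 8m`,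
Bernoulli's inequality, together with `(1-q)^n (1+q)^n ≤ 1`, bounds the bracket below by `1/5`,
whence `μ(f)²/D(f) ≳ m/q² ≳ q⁻³`. -/

section Expectation

lemma sum_prod_bool_eq_prod_add {ι : Type*} [DecidableEq ι] (s : Finset ι) (ψ : ι → Bool → ℝ) :
    ∑ η : ↥s → Bool, ∏ v : ↥s, ψ v (η v) = ∏ x ∈ s, (ψ x true + ψ x false) := by
  rw [← Fintype.piFinset_univ, ← Finset.prod_univ_sum]
  simp only [Fintype.sum_bool]
  exact Finset.prod_coe_sort s fun x => ψ x true + ψ x false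

@[simp]
lemma extendZ_coe (s : Finset ℤ) (η : ↥s → Bool) (v : ↥s) : extendZ s η v = η v := by
  simp [extendZ]

variable {q : ℝ} {s : Finset ℤ}

lemma ElocZ_prod_of_subset {t : Finset ℤ} (hts : t ⊆ s) (φ : ℤ → Bool → ℝ) :
    ElocZ q s (fun η => ∏ x ∈ t, φ x (η x)) =
      ∏ x ∈ t, ((1 - q) * φ x true + q * φ x false) := by
  have restrict (η : ↥s → Bool) : ∏ x ∈ t, φ x (extendZ s η x) =
      ∏ v : ↥s, if (v : ℤ) ∈ t then φ v (η v) else 1 := by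
    have h := Finset.prod_ite_mem s t fun y => φ y (extendZ s η y)
    rw [Finset.inter_eq_right.2 hts] at h
    rw [← h, ← Finset.prod_coe_sort s]
    simp only [extendZ_coe]
  have factor (x : ℤ) : (1 - q) * (if x ∈ t then φ x true else 1) +
      q * (if x ∈ t then φ x false else 1) =
      if x ∈ t then (1 - q) * φ x true + q * φ x false else 1 := by
    split_ifs <;> ring
  simp only [ElocZ, restrict, ← Finset.prod_mul_distrib]
  rw [sum_prod_bool_eq_prod_add s fun x b => (if b then 1 - q else q) * if x ∈ t then φ x b else 1]
  simp only [↓reduceIte, Bool.false_eq_true, factor]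
  rw [Finset.prod_ite_mem, Finset.inter_eq_right.2 hts]

lemma ElocZ_forall_true {t : Finset ℤ} (hts : t ⊆ s) :
    ElocZ q s (fun η => if ∀ x ∈ t, η x = true then 1 else 0) = (1 - q) ^ t.card := by
  simp_rw [← Finset.prod_boole]
  exact (ElocZ_prod_of_subset hts fun _ b => if b = true then (1 : ℝ) else 0).trans (by simp)

lemma ElocZ_site_false {x : ℤ} (hx : x ∈ s) :
    ElocZ q s (fun η => if η x = false then 1 else 0) = q := by
  simpa using ElocZ_prod_of_subset (q := q) (Finset.singleton_subset_iff.2 hx)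
    fun _ b => if b = false then (1 : ℝ) else 0

lemma ElocZ_mono (hq0 : 0 ≤ q) (hq1 : q ≤ 1) {f g : (ℤ → Bool) → ℝ} (h : ∀ η, f η ≤ g η) :
    ElocZ q s f ≤ ElocZ q s g := by
  refine Finset.sum_le_sum fun η _ => mul_le_mul_of_nonneg_left (h _) ?_
  exact Finset.prod_nonneg fun v _ => by split <;> linarith

lemma ElocZ_add (f g : (ℤ → Bool) → ℝ) :
    ElocZ q s (fun η => f η + g η) = ElocZ q s f + ElocZ q s g := by
  simp only [ElocZ, mul_add, Finset.sum_add_distrib]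

lemma ElocZ_const_mul_sub (c : ℝ) (f g : (ℤ → Bool) → ℝ) :
    ElocZ q s (fun η => c * (f η - g η)) = c * (ElocZ q s f - ElocZ q s g) := by
  simp only [ElocZ, Finset.mul_sum, ← Finset.sum_sub_distrib]
  exact Finset.sum_congr rfl fun η _ => by ring

lemma ElocZ_eq_zero {f : (ℤ → Bool) → ℝ} (h : ∀ η : ↥s → Bool, f (extendZ s η) = 0) :
    ElocZ q s f = 0 :=
  Finset.sum_eq_zero fun η _ => by rw [h η, mul_zero]

end Expectation

section DistanceToVacancy

variable {η η' : ℤ → Bool} {ℓ : ℕ}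

lemma xiZ_le_natAbs {x : ℤ} (h : η x = false) : xiZ η ≤ x.natAbs :=
  Nat.sInf_le ⟨x, rfl, h⟩

lemma exists_natAbs_eq_xiZ {x : ℤ} (h : η x = false) :
    ∃ z : ℤ, z.natAbs = xiZ η ∧ η z = false :=
  Nat.sInf_mem (s := {k : ℕ | ∃ x : ℤ, x.natAbs = k ∧ η x = false}) ⟨x.natAbs, x, rfl, h⟩

lemma xiZ_flipZ_le_and_le {x y : ℤ} (hy : y = x - 1 ∨ y = x + 1) (hyf : η y = false) :
    xiZ (flipZ η x) ≤ xiZ η + 1 ∧ xiZ η ≤ xiZ (flipZ η x) + 1 := by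
  have hyx : y.natAbs ≤ x.natAbs + 1 := by omega
  have flipZ_of_ne {z : ℤ} (hz : z ≠ x) : flipZ η x z = η z := by simp [flipZ, hz]
  have hy' : flipZ η x y = false := by rw [flipZ_of_ne (by omega)]; exact hyf
  constructor
  · obtain ⟨z, hz, hzf⟩ := exists_natAbs_eq_xiZ hyf
    by_cases hzx : z = x
    · have := xiZ_le_natAbs hy'
      omega
    · have := xiZ_le_natAbs (η := flipZ η x) (by rw [flipZ_of_ne hzx]; exact hzf)
      omega
  · obtain ⟨z, hz, hzf⟩ := exists_natAbs_eq_xiZ hy'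
    by_cases hzx : z = x
    · have := xiZ_le_natAbs hyf
      omega
    · have := xiZ_le_natAbs (η := η) (by rw [← flipZ_of_ne hzx]; exact hzf)
      omega

lemma mem_windowZ {z : ℤ} : z ∈ windowZ ℓ ↔ z.natAbs ≤ 2 * ℓ := by
  simp only [windowZ, Finset.mem_Icc]
  omega

lemma card_windowZ (ℓ : ℕ) : (windowZ ℓ).card = 4 * ℓ + 1 := by
  rw [windowZ, Int.card_Icc]
  omega

-- `0 < xiZ η'` excludes the configuration without vacancies, for which `xiZ` is `sInf ∅ = 0`.
lemma xiZ_eq_of_eqOn_windowZ (hag : ∀ x ∈ windowZ ℓ, η x = η' x)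
    (hpos : 0 < xiZ η') (hlt : xiZ η' < 2 * ℓ) : xiZ η = xiZ η' := by
  obtain ⟨z, hz, hzf⟩ := Nat.sInf_mem (Nat.nonempty_of_pos_sInf hpos)
  change z.natAbs = xiZ η' at hz
  have hηz : η z = false := by rw [hag z (mem_windowZ.2 (by omega))]; exact hzf
  obtain ⟨w, hw, hwf⟩ := exists_natAbs_eq_xiZ hηz
  have := xiZ_le_natAbs hηz
  have hη'w : η' w = false := by rw [← hag w (mem_windowZ.2 (by omega))]; exact hwf
  have := xiZ_le_natAbs hη'w
  omega

end DistanceToVacancy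

section TestFunction

/-- The profile of `fPers`, with values in `ℕ` so that its properties are decided by `omega`. -/
def tent (ℓ k : ℕ) : ℕ := if k < ℓ then k else if k < 2 * ℓ then 2 * ℓ - k else 0

variable {ℓ : ℕ}

lemma fPers_eq_tent (ℓ : ℕ) (η : ℤ → Bool) : fPers ℓ η = tent ℓ (xiZ η) := by
  unfold fPers tent
  split_ifs with h₁ h₂
  · rfl
  · push_cast [Nat.cast_sub h₂.le]
    ring
  · simp

lemma localOnZ_fPers (ℓ : ℕ) : localOnZ (windowZ ℓ) (fPers ℓ) := by
  intro η η' hag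
  rw [fPers_eq_tent, fPers_eq_tent]
  congr 1
  by_cases h : 0 < xiZ η ∧ xiZ η < 2 * ℓ
  · rw [xiZ_eq_of_eqOn_windowZ (fun x hx => (hag x hx).symm) h.1 h.2]
  by_cases h' : 0 < xiZ η' ∧ xiZ η' < 2 * ℓ
  · rw [xiZ_eq_of_eqOn_windowZ hag h'.1 h'.2]
  unfold tent
  split_ifs <;> omega

lemma fPers_eq_zero_of_origin_empty (ℓ : ℕ) (η : ℤ → Bool) (h : η 0 = false) :
    fPers ℓ η = 0 := by
  have hxi : xiZ η = 0 := by simpa using xiZ_le_natAbs h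
  have htent : tent ℓ 0 = 0 := by unfold tent; split_ifs <;> omega
  rw [fPers_eq_tent, hxi, htent, Nat.cast_zero]

lemma sq_fPers_flipZ_sub_le_one {η : ℤ → Bool} {x y : ℤ} (hy : y = x - 1 ∨ y = x + 1)
    (hyf : η y = false) : (fPers ℓ (flipZ η x) - fPers ℓ η) ^ 2 ≤ 1 := by
  obtain ⟨h₁, h₂⟩ := xiZ_flipZ_le_and_le hy hyf
  have hlip : tent ℓ (xiZ (flipZ η x)) ≤ tent ℓ (xiZ η) + 1 ∧
      tent ℓ (xiZ η) ≤ tent ℓ (xiZ (flipZ η x)) + 1 := by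
    unfold tent
    split_ifs <;> omega
  rw [sq_le_one_iff_abs_le_one, abs_le, fPers_eq_tent, fPers_eq_tent]
  constructor <;> linarith [(Nat.cast_le (α := ℝ)).2 hlip.1, (Nat.cast_le (α := ℝ)).2 hlip.2,
    Nat.cast_succ (R := ℝ) (tent ℓ (xiZ η)), Nat.cast_succ (R := ℝ) (tent ℓ (xiZ (flipZ η x)))]

lemma indicator_sub_indicator_le_fPers {m : ℕ} (hmℓ : m < ℓ) (η : ℤ → Bool) :
    (m + 1 : ℝ) * ((if ∀ x ∈ Finset.Icc (-(m : ℤ)) m, η x = true then 1 else 0) -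
      (if ∀ x ∈ Finset.Icc (-(ℓ : ℤ)) ℓ, η x = true then 1 else 0)) ≤ fPers ℓ η := by
  have hnonneg : (0 : ℝ) ≤ fPers ℓ η := by
    rw [fPers_eq_tent]
    positivity
  by_cases hinner : ∀ x ∈ Finset.Icc (-(m : ℤ)) m, η x = true
  swap
  · simp only [hinner, if_false, zero_sub]
    split_ifs <;> linarith
  by_cases houter : ∀ x ∈ Finset.Icc (-(ℓ : ℤ)) ℓ, η x = true
  · rw [if_pos hinner, if_pos houter]
    linarith
  obtain ⟨z, hz, hzf⟩ := not_forall₂.1 houter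
  rw [Finset.mem_Icc] at hz
  rw [Bool.not_eq_true] at hzf
  have hle : xiZ η ≤ ℓ := by have := xiZ_le_natAbs hzf; omega
  have hgt : m < xiZ η := by
    obtain ⟨w, hw, hwf⟩ := exists_natAbs_eq_xiZ hzf
    by_contra! hle
    simp [hinner w (Finset.mem_Icc.2 (by omega))] at hwf
  have htent : m + 1 ≤ tent ℓ (xiZ η) := by unfold tent; split_ifs <;> omega
  rw [if_pos hinner, if_neg houter, fPers_eq_tent, sub_zero, mul_one]
  exact_mod_cast htent

end TestFunction

section Bounds

variable {q : ℝ}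

lemma ElocZ_fPers_ge (hq0 : 0 ≤ q) (hq1 : q ≤ 1) {m ℓ : ℕ} (hmℓ : m < ℓ) :
    (m + 1 : ℝ) * ((1 - q) ^ (2 * m + 1) - (1 - q) ^ (2 * ℓ + 1)) ≤
      ElocZ q (windowZ ℓ) (fPers ℓ) := by
  have hsub {k : ℕ} (hk : k ≤ 2 * ℓ) : Finset.Icc (-(k : ℤ)) k ⊆ windowZ ℓ := fun z hz => by
    rw [Finset.mem_Icc] at hz
    rw [mem_windowZ]
    omega
  have hcard (k : ℕ) : (Finset.Icc (-(k : ℤ)) k).card = 2 * k + 1 := by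
    rw [Int.card_Icc]
    omega
  have h := ElocZ_mono (s := windowZ ℓ) hq0 hq1 (indicator_sub_indicator_le_fPers hmℓ)
  rwa [ElocZ_const_mul_sub, ElocZ_forall_true (hsub (by omega)),
    ElocZ_forall_true (hsub (by omega)), hcard, hcard] at h

lemma DformZ_eq_sum_of_localOnZ {s : Finset ℤ} {f : (ℤ → Bool) → ℝ} (hf : localOnZ s f) :
    DformZ q s f = q * (1 - q) * ∑ x ∈ s,
      ElocZ q (s ∪ {x - 1, x, x + 1}) (fun η => cIndZ η x * (f (flipZ η x) - f η) ^ 2) := by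
  rw [DformZ, tsum_eq_sum]
  intro x hx
  refine ElocZ_eq_zero fun η => ?_
  rw [hf (flipZ (extendZ _ η) x) (extendZ _ η) fun z hz => by
    simp [flipZ, ne_of_mem_of_not_mem hz hx], sub_self]
  ring

lemma ElocZ_cIndZ_mul_le (hq0 : 0 ≤ q) (hq1 : q ≤ 1) {s : Finset ℤ} {x : ℤ}
    (hs₁ : x - 1 ∈ s) (hs₂ : x + 1 ∈ s) {a : (ℤ → Bool) → ℝ}
    (ha : ∀ η, (η (x - 1) = false ∨ η (x + 1) = false) → a η ≤ 1) :
    ElocZ q s (fun η => cIndZ η x * a η) ≤ 2 * q := by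
  have hpt (η : ℤ → Bool) : cIndZ η x * a η ≤
      (if η (x - 1) = false then 1 else 0) + (if η (x + 1) = false then 1 else 0) := by
    unfold cIndZ
    by_cases hc : η (x - 1) = false ∨ η (x + 1) = false
    · rw [if_pos hc, one_mul]
      have := ha η hc
      rcases hc with hc | hc <;> simp only [hc, if_true] <;> split_ifs <;> linarith
    · rw [if_neg hc, zero_mul]
      positivity
  have h := ElocZ_mono (s := s) hq0 hq1 hpt
  rw [ElocZ_add, ElocZ_site_false hs₁, ElocZ_site_false hs₂] at h
  linarith

lemma DformZ_le_of_sq_flipZ_sub_le_one (hq0 : 0 ≤ q) (hq1 : q ≤ 1) {s : Finset ℤ}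
    {f : (ℤ → Bool) → ℝ} (hf : localOnZ s f)
    (hflip : ∀ η x y, (y = x - 1 ∨ y = x + 1) → η y = false → (f (flipZ η x) - f η) ^ 2 ≤ 1) :
    DformZ q s f ≤ 2 * q ^ 2 * s.card := by
  have hterm (x : ℤ) : ElocZ q (s ∪ {x - 1, x, x + 1})
      (fun η => cIndZ η x * (f (flipZ η x) - f η) ^ 2) ≤ 2 * q :=
    ElocZ_cIndZ_mul_le hq0 hq1 (by simp) (by simp) fun η hc =>
      hc.elim (hflip η x _ (Or.inl rfl)) (hflip η x _ (Or.inr rfl))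
  have hsum := Finset.sum_le_sum fun x (_ : x ∈ s) => hterm x
  rw [Finset.sum_const, nsmul_eq_mul] at hsum
  rw [DformZ_eq_sum_of_localOnZ hf]
  calc _ ≤ q * (1 - q) * (s.card * (2 * q)) := by gcongr
    _ ≤ 2 * q ^ 2 * s.card := by nlinarith [mul_nonneg (pow_nonneg hq0 3) s.card.cast_nonneg]

lemma DformZ_fPers_le (hq0 : 0 ≤ q) (hq1 : q ≤ 1) (ℓ : ℕ) :
    DformZ q (windowZ ℓ) (fPers ℓ) ≤ 2 * q ^ 2 * (4 * ℓ + 1) := by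
  have h := DformZ_le_of_sq_flipZ_sub_le_one hq0 hq1 (localOnZ_fPers ℓ)
    fun _ _ _ hy hyf => sq_fPers_flipZ_sub_le_one hy hyf
  rwa [card_windowZ, Nat.cast_add, Nat.cast_mul, Nat.cast_ofNat, Nat.cast_one] at h

lemma one_sub_pow_le_inv_one_add_mul (hq0 : 0 ≤ q) (hq1 : q ≤ 1) (n : ℕ) :
    (1 - q) ^ n ≤ (1 + n * q)⁻¹ := by
  have hbern : 1 + n * q ≤ (1 + q) ^ n := one_add_mul_le_pow (by linarith) n
  rw [← one_div, le_div_iff₀ (by positivity)]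
  calc (1 - q) ^ n * (1 + n * q) ≤ (1 - q) ^ n * (1 + q) ^ n := by
        gcongr
    _ = (1 - q ^ 2) ^ n := by rw [← mul_pow]; ring
    _ ≤ 1 := pow_le_one₀ (by nlinarith) (by nlinarith)

lemma one_fifth_le_pow_sub_pow (hq0 : 0 ≤ q) (hq : q ≤ 1 / 30) {m : ℕ}
    (hlo : 1 ≤ m * (4 * q)) (hhi : m * (4 * q) < 1 + 4 * q) :
    1 / 5 ≤ (1 - q) ^ (2 * m + 1) - (1 - q) ^ (2 * (8 * m) + 1) := by
  have hlower : 1 + (2 * m + 1 : ℕ) * -q ≤ (1 + -q) ^ (2 * m + 1) :=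
    one_add_mul_le_pow (by linarith) _
  have hupper := one_sub_pow_le_inv_one_add_mul hq0 (by linarith) (2 * (8 * m) + 1)
  have hinv : (1 + (2 * (8 * m) + 1 : ℕ) * q)⁻¹ ≤ (1 / 5 : ℝ) := by
    rw [inv_le_comm₀ (by positivity) (by norm_num)]
    push_cast
    nlinarith
  push_cast at hlower
  rw [← sub_eq_add_neg] at hlower
  nlinarith

lemma one_le_ceil_inv_mul {x : ℝ} (hx : 0 < x) : 1 ≤ ⌈x⁻¹⌉₊ * x :=
  (inv_le_iff_one_le_mul₀ hx).1 (Nat.le_ceil x⁻¹)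

lemma ceil_inv_mul_lt_one_add {x : ℝ} (hx : 0 < x) : ⌈x⁻¹⌉₊ * x < 1 + x := by
  have h := mul_lt_mul_of_pos_right (Nat.ceil_lt_add_one (inv_nonneg.2 hx.le)) hx
  rwa [add_mul, inv_mul_cancel₀ hx.ne', one_mul] at h

lemma ofReal_sq_div_le_hitTimeZ {s : Finset ℤ} {f : (ℤ → Bool) → ℝ} (hf : localOnZ s f)
    (h0 : ∀ η, η 0 = false → f η = 0) {a b : ℝ} (ha : 0 ≤ a) (hb : 0 < b)
    (hE : a ≤ ElocZ q s f) (hD : DformZ q s f ≤ b) :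
    ENNReal.ofReal (a ^ 2 / b) ≤ hitTimeZ q := by
  rw [ENNReal.ofReal_div_of_pos hb]
  refine le_trans ?_ (le_sSup ⟨s, f, hf, h0, rfl⟩)
  gcongr

end Bounds

/-- in dimension `1`, `E_μ(τ_0) ≥ C q^{−3}` for small `q`. -/
theorem hitTimeZ_ge : ∃ C > (0 : ℝ), ∃ q₀ > (0 : ℝ), ∀ q : ℝ, 0 < q → q ≤ q₀ →
    ENNReal.ofReal (C * q ^ (-3 : ℤ)) ≤ hitTimeZ q := by
  refine ⟨1 / 6400, by norm_num, 1 / 30, by norm_num, fun q hq hq₀ => ?_⟩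
  set m := ⌈(4 * q)⁻¹⌉₊
  have hm : 0 < m := Nat.ceil_pos.2 (by positivity)
  have hlo := one_le_ceil_inv_mul (by positivity : 0 < 4 * q)
  have hhi := ceil_inv_mul_lt_one_add (by positivity : 0 < 4 * q)
  have hE : (m + 1 : ℝ) / 5 ≤ ElocZ q (windowZ (8 * m)) (fPers (8 * m)) :=
    calc (m + 1 : ℝ) / 5 ≤ (m + 1) * ((1 - q) ^ (2 * m + 1) - (1 - q) ^ (2 * (8 * m) + 1)) := by
          have := one_fifth_le_pow_sub_pow hq.le hq₀ hlo hhi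
          nlinarith
      _ ≤ _ := ElocZ_fPers_ge hq.le (by linarith) (by omega)
  have hD := DformZ_fPers_le hq.le (by linarith) (8 * m)
  refine le_trans (ENNReal.ofReal_le_ofReal ?_) (ofReal_sq_div_le_hitTimeZ (localOnZ_fPers _)
    (fPers_eq_zero_of_origin_empty _) (by positivity) (by positivity) hE hD)
  -- remaining: `q⁻³ / 6400 ≤ ((m + 1) / 5)² / (2q² (32m + 1))`, which follows from `4mq ≥ 1`
  rw [zpow_neg, zpow_ofNat, ← div_eq_mul_inv, div_div,
    div_le_div_iff₀ (by positivity) (by positivity)]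
  have hmq : 64 * m + 2 ≤ 256 * (m + 1) ^ 2 * q := by nlinarith
  push_cast
  nlinarith [mul_le_mul_of_nonneg_left hmq (sq_nonneg q)]

end
end

section
/- Let d = 2 and q small. The mean hitting time of {η(0) = 0} for the stationary FA1f process on ℤ² satisfies E_μ(τ_0) ≥ C q^{−2} log(1/q). -/
/-!
Test the variational principle with `testFn ℓ`. Its mean is at least `(1 - q) ^ |B_ℓ| · log (ℓ + 1)`,
`B_ℓ` the `ℓ¹`-ball of radius `ℓ`. A flip at a site `x` with an empty neighbour moves it by at most
`c = log (‖x‖₁ + 2) - log (‖x‖₁ + 1) ≤ 1 / (‖x‖₁ + 1)`, and the constraint costs a factor `q`, so `x`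
contributes `O(q² c / (‖x‖₁ + 1))` to the Dirichlet form. A sphere of radius `a` in `ℤ²` has `O(a)`
sites, so the sum telescopes to `D ≤ 16 q² log (ℓ + 2)`. With `ℓ = ⌈q^{-1/2}⌉` the ball has `O(1/q)`
sites, hence it is fully occupied with probability bounded below, `μ(f) ≳ log (1/q)`, and
`μ(f)² / D(f) ≳ q⁻² log (1/q)`.
-/

open Finset ENNReal

noncomputable section

/-- The configuration `η` flipped at the site `x`. -/
def flipCfg {d : ℕ} (η : (Fin d → ℤ) → Bool) (x : Fin d → ℤ) : (Fin d → ℤ) → Bool :=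
  fun y => if y = x then !(η y) else η y

/-- The nearest neighbours of a site `x ∈ ℤ^d`. -/
def latNbrs {d : ℕ} (x : Fin d → ℤ) : Finset (Fin d → ℤ) :=
  Finset.univ.biUnion fun i : Fin d =>
    {Function.update x i (x i + 1), Function.update x i (x i - 1)}

/-- Extension of a configuration on a finite set of sites by fully occupied outside. -/
def extendCfg {d : ℕ} (s : Finset (Fin d → ℤ)) (η : ↥s → Bool) : (Fin d → ℤ) → Bool :=
  fun x => if h : x ∈ s then η ⟨x, h⟩ else true

/-- Expectation, under the product Bernoulli(1−q) measure (`true` = occupied, probability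
`1−q`; `false` = empty, probability `q`), of a function depending only on the sites in the
finite set `s`. -/
def Eloc {d : ℕ} (q : ℝ) (s : Finset (Fin d → ℤ)) (g : ((Fin d → ℤ) → Bool) → ℝ) : ℝ :=
  ∑ η : ↥s → Bool, (∏ v : ↥s, if η v then (1 - q) else q) * g (extendCfg s η)

/-- The FA1f constraint at `x` (as a real indicator): some nearest neighbour of `x` is empty. -/
def cInd {d : ℕ} (η : (Fin d → ℤ) → Bool) (x : Fin d → ℤ) : ℝ :=
  if ∃ y ∈ latNbrs x, η y = false then 1 else 0

/-- The FA1f Dirichlet form `D(f) = q(1−q) Σ_x μ(c_x (f(η^x) − f(η))²)` of a function `f`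
depending only on the sites in the finite set `s`. -/
def Dform {d : ℕ} (q : ℝ) (s : Finset (Fin d → ℤ)) (f : ((Fin d → ℤ) → Bool) → ℝ) : ℝ :=
  q * (1 - q) * ∑' x : Fin d → ℤ,
    Eloc q (s ∪ insert x (latNbrs x))
      (fun η => cInd η x * (f (flipCfg η x) - f η) ^ 2)

/-- `f` depends only on the sites in `s`. -/
def localOn {d : ℕ} (s : Finset (Fin d → ℤ)) (f : ((Fin d → ℤ) → Bool) → ℝ) : Prop :=
  ∀ η η' : (Fin d → ℤ) → Bool, (∀ x ∈ s, η x = η' x) → f η = f η'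

/-- Variance of a function depending only on the sites in `s`. -/
def Varloc {d : ℕ} (q : ℝ) (s : Finset (Fin d → ℤ)) (f : ((Fin d → ℤ) → Bool) → ℝ) : ℝ :=
  Eloc q s fun η => (f η - Eloc q s f) ^ 2

/-- The mean hitting time `E_μ(τ_0)` of the event `{η(0) = 0}` for the stationary FA1f
process on `ℤ^d`, via the variational principle
`E_μ(τ_0) = sup{μ(f)²/D(f) : f local, f = 0 on {η(0) = 0}}`. -/
def hitTime (d : ℕ) (q : ℝ) : ℝ≥0∞ :=
  sSup {r : ℝ≥0∞ | ∃ (s : Finset (Fin d → ℤ)) (f : ((Fin d → ℤ) → Bool) → ℝ),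
    localOn s f ∧ (∀ η, η (fun _ => 0) = false → f η = 0) ∧
    r = ENNReal.ofReal (Eloc q s f ^ 2) / ENNReal.ofReal (Dform q s f)}


section BernoulliExpectation

variable {d : ℕ} {q : ℝ} {s : Finset (Fin d → ℤ)}

lemma bernoulliWeight_nonneg (hq₀ : 0 ≤ q) (hq₁ : q ≤ 1) (η : ↥s → Bool) :
    0 ≤ ∏ v : ↥s, if η v then (1 - q) else q :=
  prod_nonneg fun v _ => by split <;> linarith

lemma Eloc_mono (hq₀ : 0 ≤ q) (hq₁ : q ≤ 1) {g g' : ((Fin d → ℤ) → Bool) → ℝ}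
    (h : ∀ η, g η ≤ g' η) : Eloc q s g ≤ Eloc q s g' :=
  sum_le_sum fun η _ => mul_le_mul_of_nonneg_left (h _) (bernoulliWeight_nonneg hq₀ hq₁ η)

lemma Eloc_nonneg (hq₀ : 0 ≤ q) (hq₁ : q ≤ 1) {g : ((Fin d → ℤ) → Bool) → ℝ}
    (h : ∀ η, 0 ≤ g η) : 0 ≤ Eloc q s g :=
  sum_nonneg fun η _ => mul_nonneg (bernoulliWeight_nonneg hq₀ hq₁ η) (h _)

lemma Eloc_eq_zero {g : ((Fin d → ℤ) → Bool) → ℝ} (h : ∀ η, g η = 0) : Eloc q s g = 0 := by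
  simp [Eloc, h]

lemma Eloc_sum {ι : Type*} (A : Finset ι) (F : ι → ((Fin d → ℤ) → Bool) → ℝ) :
    Eloc q s (fun η => ∑ i ∈ A, F i η) = ∑ i ∈ A, Eloc q s (F i) := by
  simp only [Eloc, mul_sum]
  exact sum_comm

lemma Eloc_const_mul (k : ℝ) (g : ((Fin d → ℤ) → Bool) → ℝ) :
    Eloc q s (fun η => k * g η) = k * Eloc q s g := by
  simp only [Eloc, mul_sum, mul_left_comm k]

lemma Eloc_prod (G : (Fin d → ℤ) → Bool → ℝ) :
    Eloc q s (fun η => ∏ z ∈ s, G z (η z)) = ∏ z ∈ s, ((1 - q) * G z true + q * G z false) := by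
  have hext : ∀ (η : ↥s → Bool) (v : ↥s), extendCfg s η v = η v := fun η v => dif_pos v.2
  simp only [Eloc, ← prod_coe_sort s, hext, ← prod_mul_distrib]
  rw [← Fintype.prod_sum fun (v : ↥s) (b : Bool) => (if b then 1 - q else q) * G v b]
  simp

lemma Eloc_prod_of_subset {t : Finset (Fin d → ℤ)} (hts : t ⊆ s) (G : (Fin d → ℤ) → Bool → ℝ) :
    Eloc q s (fun η => ∏ z ∈ t, G z (η z)) = ∏ z ∈ t, ((1 - q) * G z true + q * G z false) := by
  have hrestrict : ∀ F : (Fin d → ℤ) → ℝ, ∏ z ∈ t, F z = ∏ z ∈ s, if z ∈ t then F z else 1 :=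
    fun F => by rw [prod_ite_mem, inter_eq_right.2 hts]
  simp only [hrestrict]
  refine (Eloc_prod fun z b => if z ∈ t then G z b else 1).trans (prod_congr rfl fun z _ => ?_)
  split_ifs <;> ring

def allOccupied (t : Finset (Fin d → ℤ)) (η : (Fin d → ℤ) → Bool) : ℝ :=
  if ∀ z ∈ t, η z = true then 1 else 0

lemma allOccupied_congr {t : Finset (Fin d → ℤ)} {η η' : (Fin d → ℤ) → Bool}
    (h : ∀ z ∈ t, η z = η' z) : allOccupied t η = allOccupied t η' := by
  simp only [allOccupied, forall₂_congr fun z hz => Iff.of_eq (congrArg (· = true) (h z hz))]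

lemma allOccupied_eq_zero {t : Finset (Fin d → ℤ)} {η : (Fin d → ℤ) → Bool} {z : Fin d → ℤ}
    (hz : z ∈ t) (hηz : η z = false) : allOccupied t η = 0 :=
  if_neg fun h => by simp [h z hz] at hηz

lemma Eloc_allOccupied {t : Finset (Fin d → ℤ)} (hts : t ⊆ s) :
    Eloc q s (allOccupied t) = (1 - q) ^ #t := by
  have hprod : allOccupied t = fun η => ∏ z ∈ t, if η z = true then (1 : ℝ) else 0 :=
    funext fun η => prod_boole.symm
  rw [hprod, Eloc_prod_of_subset hts fun _ b => if b = true then 1 else 0]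
  simp

lemma Eloc_isEmpty {y : Fin d → ℤ} (hy : y ∈ s) :
    Eloc q s (fun η => if η y = false then 1 else 0) = q := by
  simpa using Eloc_prod_of_subset (q := q) (singleton_subset_iff.2 hy)
    fun _ b => if b = false then (1 : ℝ) else 0

end BernoulliExpectation

section Lattice

variable {d : ℕ}

def l1norm (x : Fin d → ℤ) : ℕ := ∑ i, (x i).natAbs

def l1Ball (d r : ℕ) : Finset (Fin d → ℤ) :=
  {x ∈ Icc (fun _ => -(r : ℤ)) (fun _ => (r : ℤ)) | l1norm x ≤ r}

lemma natAbs_le_l1norm (x : Fin d → ℤ) (i : Fin d) : (x i).natAbs ≤ l1norm x :=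
  single_le_sum (f := fun i => (x i).natAbs) (fun _ _ => Nat.zero_le _) (mem_univ i)

@[simp]
lemma mem_l1Ball {r : ℕ} {x : Fin d → ℤ} : x ∈ l1Ball d r ↔ l1norm x ≤ r := by
  refine ⟨fun h => (mem_filter.1 h).2, fun h => mem_filter.2 ⟨mem_Icc.2 ⟨?_, ?_⟩, h⟩⟩ <;>
    intro i <;> have := natAbs_le_l1norm x i <;> simp only <;> omega

lemma l1Ball_mono {r r' : ℕ} (h : r ≤ r') : l1Ball d r ⊆ l1Ball d r' :=
  fun _ hx => mem_l1Ball.2 ((mem_l1Ball.1 hx).trans h)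

lemma zero_mem_l1Ball (r : ℕ) : (fun _ => 0 : Fin d → ℤ) ∈ l1Ball d r := by
  simp [l1norm]

lemma card_l1Ball_le (r : ℕ) : #(l1Ball d r) ≤ (2 * r + 1) ^ d := by
  refine (card_filter_le _ _).trans_eq ?_
  simp only [Pi.card_Icc, Int.card_Icc, prod_const, card_univ, Fintype.card_fin]
  congr 1
  omega

lemma l1norm_update_add (x : Fin d → ℤ) (i : Fin d) (v : ℤ) :
    l1norm (Function.update x i v) + (x i).natAbs = l1norm x + v.natAbs := by
  have hupd : ∀ j, (Function.update x i v j).natAbs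
      = Function.update (fun j => (x j).natAbs) i v.natAbs j :=
    fun j => Function.apply_update (fun _ => Int.natAbs) x i v j
  have h₁ := sum_update_of_mem (mem_univ i) (fun j => (x j).natAbs) v.natAbs
  have h₂ := sum_update_of_mem (mem_univ i) (fun j => (x j).natAbs) (x i).natAbs
  simp only [Function.update_eq_self] at h₂
  simp only [l1norm, hupd, h₁, h₂]
  ring

lemma mem_latNbrs {x y : Fin d → ℤ} :
    y ∈ latNbrs x ↔ ∃ i, y = Function.update x i (x i + 1) ∨ y = Function.update x i (x i - 1) := by
  simp [latNbrs]

lemma ne_of_mem_latNbrs {x y : Fin d → ℤ} (h : y ∈ latNbrs x) : y ≠ x := by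
  obtain ⟨i, rfl | rfl⟩ := mem_latNbrs.1 h <;> intro hxy <;>
    have := congrFun hxy i <;> simp at this

lemma l1norm_le_of_mem_latNbrs {x y : Fin d → ℤ} (h : y ∈ latNbrs x) :
    l1norm y ≤ l1norm x + 1 := by
  obtain ⟨i, rfl | rfl⟩ := mem_latNbrs.1 h <;> have := l1norm_update_add x i <;> grind

lemma card_latNbrs_le (x : Fin d → ℤ) : #(latNbrs x) ≤ 2 * d :=
  card_biUnion_le.trans ((sum_le_sum fun _ _ => card_le_two).trans_eq (by simp [mul_comm]))

end Lattice

section TestFunction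

def logIncr (r : ℕ) : ℝ := Real.log (r + 2) - Real.log (r + 1)

lemma logIncr_nonneg (r : ℕ) : 0 ≤ logIncr r :=
  sub_nonneg.2 (Real.log_le_log (by positivity) (by linarith))

lemma logIncr_mul_le_one (r : ℕ) : logIncr r * (r + 1) ≤ 1 := by
  have hr : (0 : ℝ) < r + 1 := by positivity
  have hlog := Real.log_le_sub_one_of_pos (x := (r + 2) / (r + 1)) (by positivity)
  rw [Real.log_div (by positivity) hr.ne', div_sub_one hr.ne', le_div_iff₀ hr] at hlog
  rw [logIncr]
  linarith

lemma sum_range_logIncr (n : ℕ) : ∑ r ∈ range n, logIncr r = Real.log (n + 1) := by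
  have htel := sum_range_sub (fun k : ℕ => Real.log (k + 1)) n
  simp only [Nat.cast_add, Nat.cast_one, Nat.cast_zero, zero_add, Real.log_one, sub_zero] at htel
  rw [← htel]
  exact sum_congr rfl fun r _ => by rw [logIncr]; ring_nf

variable {d : ℕ}

/-- Telescoping, `testFn ℓ η = log (1 + min ℓ D)` with `D` the `ℓ¹`-distance from the origin to
the nearest empty site: the paper's test function. -/
def testFn (ℓ : ℕ) (η : (Fin d → ℤ) → Bool) : ℝ :=
  ∑ r ∈ range ℓ, logIncr r * allOccupied (l1Ball d r) η

lemma testFn_localOn (ℓ : ℕ) : localOn (l1Ball d ℓ) (testFn ℓ) :=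
  fun _ _ h => sum_congr rfl fun r hr => by
    rw [allOccupied_congr fun z hz => h z (l1Ball_mono (mem_range.1 hr).le hz)]

lemma testFn_eq_zero (ℓ : ℕ) (η : (Fin d → ℤ) → Bool) (hη : η (fun _ => 0) = false) :
    testFn ℓ η = 0 :=
  sum_eq_zero fun r _ => by rw [allOccupied_eq_zero (zero_mem_l1Ball r) hη, mul_zero]

lemma allOccupied_flipCfg_of_ne {x y : Fin d → ℤ} {η : (Fin d → ℤ) → Bool} {r : ℕ}
    (hr : r ≠ l1norm x) (hy : y ∈ latNbrs x) (hηy : η y = false) :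
    allOccupied (l1Ball d r) (flipCfg η x) = allOccupied (l1Ball d r) η := by
  rcases hr.lt_or_gt with hlt | hgt
  · exact allOccupied_congr fun z hz => if_neg (by rintro rfl; simp at hz; omega)
  · have hyr : y ∈ l1Ball d r := mem_l1Ball.2 ((l1norm_le_of_mem_latNbrs hy).trans hgt)
    rw [allOccupied_eq_zero hyr hηy,
      allOccupied_eq_zero hyr ((if_neg (ne_of_mem_latNbrs hy)).trans hηy)]

/-- Only the ball of radius `‖x‖₁` can change status: smaller balls miss `x`, and larger ones
contain the empty neighbour `y` before and after the flip. -/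
lemma abs_testFn_flipCfg_sub_le (ℓ : ℕ) {x y : Fin d → ℤ} {η : (Fin d → ℤ) → Bool}
    (hy : y ∈ latNbrs x) (hηy : η y = false) :
    |testFn ℓ (flipCfg η x) - testFn ℓ η| ≤ logIncr (l1norm x) := by
  set Δ : ℕ → ℝ := fun r =>
    logIncr r * (allOccupied (l1Ball d r) (flipCfg η x) - allOccupied (l1Ball d r) η)
  have hdiff : testFn ℓ (flipCfg η x) - testFn ℓ η = ∑ r ∈ range ℓ, Δ r := by
    simp only [Δ, testFn, mul_sub, sum_sub_distrib]
  have hsingle : ∀ r ∈ range ℓ, Δ r = if l1norm x = r then Δ (l1norm x) else 0 := by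
    intro r _
    split_ifs with hr
    · rw [hr]
    · simp only [Δ, allOccupied_flipCfg_of_ne (Ne.symm hr) hy hηy, sub_self, mul_zero]
  rw [hdiff, sum_congr rfl hsingle, sum_ite_eq]
  split_ifs
  · rw [abs_mul, abs_of_nonneg (logIncr_nonneg _)]
    refine mul_le_of_le_one_right (logIncr_nonneg _) ?_
    unfold allOccupied
    split_ifs <;> norm_num
  · simpa using logIncr_nonneg _

end TestFunction

section DirichletForm

variable {d : ℕ} {q : ℝ}

lemma cInd_mul_sq_testFn_flipCfg_sub_le (ℓ : ℕ) (x : Fin d → ℤ) (η : (Fin d → ℤ) → Bool) :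
    cInd η x * (testFn ℓ (flipCfg η x) - testFn ℓ η) ^ 2 ≤
      logIncr (l1norm x) ^ 2 * ∑ y ∈ latNbrs x, if η y = false then 1 else 0 := by
  have hterm_nonneg : ∀ y ∈ latNbrs x, (0 : ℝ) ≤ if η y = false then 1 else 0 :=
    fun _ _ => by split_ifs <;> norm_num
  unfold cInd
  split_ifs with h
  · obtain ⟨y, hy, hηy⟩ := h
    have hsq := abs_le.1 (abs_testFn_flipCfg_sub_le ℓ hy hηy)
    have hcount : (1 : ℝ) ≤ ∑ y ∈ latNbrs x, if η y = false then 1 else 0 :=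
      (if_pos hηy).symm.le.trans (single_le_sum hterm_nonneg hy)
    nlinarith [sq_le_sq' hsq.1 hsq.2, sq_nonneg (logIncr (l1norm x))]
  · rw [zero_mul]
    exact mul_nonneg (sq_nonneg _) (sum_nonneg hterm_nonneg)

lemma Eloc_cInd_mul_sq_testFn_flipCfg_sub_le (hq₀ : 0 ≤ q) (hq₁ : q ≤ 1) (ℓ : ℕ)
    {x : Fin d → ℤ} {s : Finset (Fin d → ℤ)} (hs : latNbrs x ⊆ s) :
    Eloc q s (fun η => cInd η x * (testFn ℓ (flipCfg η x) - testFn ℓ η) ^ 2) ≤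
      2 * d * q * logIncr (l1norm x) ^ 2 := by
  refine (Eloc_mono hq₀ hq₁ (cInd_mul_sq_testFn_flipCfg_sub_le ℓ x)).trans ?_
  rw [Eloc_const_mul, Eloc_sum, sum_congr rfl fun y hy => Eloc_isEmpty (hs hy), sum_const,
    nsmul_eq_mul]
  have hcard : (#(latNbrs x) : ℝ) ≤ 2 * d := by exact_mod_cast card_latNbrs_le x
  nlinarith [mul_le_mul_of_nonneg_right hcard hq₀, sq_nonneg (logIncr (l1norm x))]

lemma Eloc_cInd_mul_sq_testFn_flipCfg_sub_eq_zero (ℓ : ℕ) {x : Fin d → ℤ} (hx : x ∉ l1Ball d ℓ)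
    (s : Finset (Fin d → ℤ)) :
    Eloc q s (fun η => cInd η x * (testFn ℓ (flipCfg η x) - testFn ℓ η) ^ 2) = 0 :=
  Eloc_eq_zero fun η => by
    rw [testFn_localOn ℓ (flipCfg η x) η fun z hz => if_neg (by rintro rfl; exact hx hz), sub_self]
    ring

lemma Dform_testFn_le (hq₀ : 0 ≤ q) (hq₁ : q ≤ 1) (ℓ : ℕ) :
    Dform q (l1Ball d ℓ) (testFn ℓ) ≤
      2 * d * q ^ 2 * ∑ x ∈ l1Ball d ℓ, logIncr (l1norm x) ^ 2 := by
  unfold Dform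
  rw [tsum_eq_sum fun x hx => Eloc_cInd_mul_sq_testFn_flipCfg_sub_eq_zero ℓ hx _]
  set S := ∑ x ∈ l1Ball d ℓ, Eloc q (l1Ball d ℓ ∪ insert x (latNbrs x))
    (fun η => cInd η x * (testFn ℓ (flipCfg η x) - testFn ℓ η) ^ 2)
  have hS : S ≤ 2 * d * q * ∑ x ∈ l1Ball d ℓ, logIncr (l1norm x) ^ 2 := by
    rw [mul_sum]
    exact sum_le_sum fun x _ => Eloc_cInd_mul_sq_testFn_flipCfg_sub_le hq₀ hq₁ ℓ
      ((subset_insert _ _).trans subset_union_right)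
  have hS₀ : 0 ≤ S := sum_nonneg fun x _ => Eloc_nonneg hq₀ hq₁ fun η =>
    mul_nonneg (by unfold cInd; split_ifs <;> norm_num) (sq_nonneg _)
  nlinarith [mul_le_mul_of_nonneg_left hS hq₀, mul_nonneg (sq_nonneg q) hS₀]

end DirichletForm

section Mean

variable {d : ℕ} {q : ℝ}

lemma Eloc_testFn (ℓ : ℕ) :
    Eloc q (l1Ball d ℓ) (testFn ℓ) =
      ∑ r ∈ range ℓ, logIncr r * (1 - q) ^ #(l1Ball d r) := by
  refine (Eloc_sum (range ℓ) fun r η => logIncr r * allOccupied (l1Ball d r) η).trans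
    (sum_congr rfl fun r hr => ?_)
  rw [Eloc_const_mul, Eloc_allOccupied (l1Ball_mono (mem_range.1 hr).le)]

lemma le_Eloc_testFn (hq₀ : 0 ≤ q) (hq₁ : q ≤ 1) (ℓ : ℕ) :
    (1 - q) ^ #(l1Ball d ℓ) * Real.log (ℓ + 1) ≤
      Eloc q (l1Ball d ℓ) (testFn ℓ) := by
  rw [Eloc_testFn, ← sum_range_logIncr, mul_sum]
  refine sum_le_sum fun r hr => ?_
  rw [mul_comm]
  exact mul_le_mul_of_nonneg_left (pow_le_pow_of_le_one (sub_nonneg.2 hq₁) (by linarith)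
    (card_le_card (l1Ball_mono (mem_range.1 hr).le))) (logIncr_nonneg r)

end Mean

lemma l1norm_two (x : Fin 2 → ℤ) : l1norm x = (x 0).natAbs + (x 1).natAbs :=
  Fin.sum_univ_two _

/-- A point of the `ℓ¹`-sphere of radius `a` in `ℤ²` is determined by its first coordinate and
the sign of its second. -/
lemma card_filter_l1norm_eq_le (s : Finset (Fin 2 → ℤ)) (a : ℕ) :
    #{x ∈ s | l1norm x = a} ≤ 4 * a + 2 := by
  have hinj := card_le_card_of_injOn (fun x : Fin 2 → ℤ => (x 0, decide (0 ≤ x 1)))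
    (s := {x ∈ s | l1norm x = a}) (t := Icc (-(a : ℤ)) a ×ˢ univ) ?_ ?_
  · refine hinj.trans_eq ?_
    simp only [card_product, Int.card_Icc, card_univ, Fintype.card_bool]
    omega
  · intro x hx
    have := (mem_filter.1 hx).2
    rw [l1norm_two] at this
    simp only [coe_product, coe_Icc, coe_univ, Set.mem_prod, Set.mem_Icc, Set.mem_univ, and_true]
    omega
  · intro x hx y hy hxy
    have hx' := (mem_filter.1 hx).2
    have hy' := (mem_filter.1 hy).2
    rw [l1norm_two] at hx' hy'
    simp only [Prod.mk.injEq, decide_eq_decide] at hxy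
    ext i
    fin_cases i <;> simp <;> omega

lemma sum_l1Ball_logIncr_sq_le (ℓ : ℕ) :
    ∑ x ∈ l1Ball 2 ℓ, logIncr (l1norm x) ^ 2 ≤ 4 * Real.log (ℓ + 2) := by
  have hmaps : ∀ x ∈ l1Ball 2 ℓ, l1norm x ∈ range (ℓ + 1) :=
    fun x hx => mem_range.2 (Nat.lt_succ_of_le (mem_l1Ball.1 hx))
  have hsphere : ∀ a ∈ range (ℓ + 1),
      ∑ x ∈ l1Ball 2 ℓ with l1norm x = a, logIncr (l1norm x) ^ 2 ≤ 4 * logIncr a := by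
    intro a _
    rw [sum_congr rfl fun x hx => by rw [(mem_filter.1 hx).2], sum_const, nsmul_eq_mul]
    have hcard : (#{x ∈ l1Ball 2 ℓ | l1norm x = a} : ℝ) ≤ 4 * a + 2 := by
      exact_mod_cast card_filter_l1norm_eq_le _ a
    nlinarith [logIncr_nonneg a, logIncr_mul_le_one a,
      mul_le_mul_of_nonneg_right hcard (sq_nonneg (logIncr a))]
  rw [← sum_fiberwise_of_maps_to hmaps]
  refine (sum_le_sum hsphere).trans_eq ?_
  rw [← mul_sum, sum_range_logIncr]
  push_cast
  ring_nf

lemma le_hitTime {d : ℕ} {q : ℝ} {s : Finset (Fin d → ℤ)} {f : ((Fin d → ℤ) → Bool) → ℝ}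
    (hf : localOn s f) (hf₀ : ∀ η, η (fun _ => 0) = false → f η = 0) :
    ENNReal.ofReal (Eloc q s f ^ 2) / ENNReal.ofReal (Dform q s f) ≤ hitTime d q :=
  le_sSup ⟨s, f, hf, hf₀, rfl⟩

lemma le_hitTime_two {q : ℝ} (hq₀ : 0 ≤ q) (hq₁ : q ≤ 1) (ℓ : ℕ) :
    ENNReal.ofReal (((1 - q) ^ (2 * ℓ + 1) ^ 2 * Real.log (ℓ + 1)) ^ 2) /
      ENNReal.ofReal (16 * q ^ 2 * Real.log (ℓ + 2)) ≤ hitTime 2 q := by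
  have hmean : (1 - q) ^ (2 * ℓ + 1) ^ 2 * Real.log (ℓ + 1) ≤ Eloc q (l1Ball 2 ℓ) (testFn ℓ) :=
    (mul_le_mul_of_nonneg_right (pow_le_pow_of_le_one (sub_nonneg.2 hq₁) (by linarith)
      (card_l1Ball_le ℓ)) (Real.log_nonneg (by linarith [ℓ.cast_nonneg (α := ℝ)]))).trans
      (le_Eloc_testFn hq₀ hq₁ ℓ)
  have hdirichlet : Dform q (l1Ball 2 ℓ) (testFn ℓ) ≤ 16 * q ^ 2 * Real.log (ℓ + 2) := by
    refine (Dform_testFn_le hq₀ hq₁ ℓ).trans ?_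
    have := mul_le_mul_of_nonneg_left (sum_l1Ball_logIncr_sq_le ℓ) (sq_nonneg q)
    push_cast
    linarith
  refine le_trans ?_ (le_hitTime (testFn_localOn ℓ) (testFn_eq_zero ℓ))
  refine ENNReal.div_le_div (ENNReal.ofReal_le_ofReal (pow_le_pow_left₀ ?_ hmean 2))
    (ENNReal.ofReal_le_ofReal hdirichlet)
  exact mul_nonneg (pow_nonneg (sub_nonneg.2 hq₁) _)
    (Real.log_nonneg (by linarith [ℓ.cast_nonneg (α := ℝ)]))

lemma exp_neg_two_mul_le_one_sub_pow {q : ℝ} (hq₀ : 0 ≤ q) (hq : q ≤ 1 / 2) (n : ℕ) :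
    Real.exp (-(2 * q * n)) ≤ (1 - q) ^ n := by
  have hbase : Real.exp (-(2 * q)) ≤ 1 - q := by
    rw [Real.exp_neg, inv_le_iff_one_le_mul₀ (Real.exp_pos _)]
    nlinarith [Real.add_one_le_exp (2 * q)]
  calc Real.exp (-(2 * q * n)) = Real.exp (-(2 * q)) ^ n := by rw [← Real.exp_nat_mul]; ring_nf
    _ ≤ (1 - q) ^ n := pow_le_pow_left₀ (Real.exp_pos _).le hbase n

lemma ceil_sqrt_inv_bounds {q : ℝ} (hq : 0 < q) (hq₀ : q ≤ 1 / 16) :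
    q * (2 * ⌈√(1 / q)⌉₊ + 1) ^ 2 ≤ 9 ∧ Real.log (1 / q) / 2 ≤ Real.log (⌈√(1 / q)⌉₊ + 1) ∧
      Real.log (⌈√(1 / q)⌉₊ + 2) ≤ Real.log (1 / q) := by
  set σ := √(1 / q)
  have hσsq : σ ^ 2 = 1 / q := Real.sq_sqrt (by positivity)
  have hσ : 4 ≤ σ := Real.le_sqrt_of_sq_le (by rw [le_div_iff₀ hq]; linarith)
  have hℓ₁ : σ ≤ ⌈σ⌉₊ := Nat.le_ceil σ
  have hℓ₂ : (⌈σ⌉₊ : ℝ) < σ + 1 := Nat.ceil_lt_add_one (by linarith)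
  have hqσ : q * σ ^ 2 = 1 := by rw [hσsq]; field_simp
  refine ⟨?_, ?_, Real.log_le_log (by positivity) (by nlinarith)⟩
  · nlinarith
  · rw [← Real.log_sqrt (by positivity)]
    exact Real.log_le_log (by positivity) (by linarith)

/-- in dimension `2`, `E_μ(τ_0) ≥ C q^{−2} log(1/q)` for small `q`. -/
theorem hitTime_ge_two_dim : ∃ C > (0 : ℝ), ∃ q₀ > (0 : ℝ), ∀ q : ℝ, 0 < q → q ≤ q₀ →
    ENNReal.ofReal (C * q ^ (-2 : ℤ) * Real.log (1 / q)) ≤ hitTime 2 q := by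
  refine ⟨Real.exp (-18) ^ 2 / 64, by positivity, 1 / 16, by norm_num, fun q hq hq₀ => ?_⟩
  set ℓ := ⌈√(1 / q)⌉₊
  set L := Real.log (1 / q)
  obtain ⟨hvolume, hlower, hupper⟩ := ceil_sqrt_inv_bounds hq hq₀
  have hL : 0 < L := Real.log_pos (one_lt_one_div hq (by linarith))
  have hoccupied : Real.exp (-18) ≤ (1 - q) ^ (2 * ℓ + 1) ^ 2 :=
    (Real.exp_le_exp.2 (by push_cast; linarith)).trans
      (exp_neg_two_mul_le_one_sub_pow hq.le (by linarith) _)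
  calc ENNReal.ofReal (Real.exp (-18) ^ 2 / 64 * q ^ (-2 : ℤ) * L)
      = ENNReal.ofReal ((Real.exp (-18) * (L / 2)) ^ 2) /
          ENNReal.ofReal (16 * q ^ 2 * L) := by
        rw [← ENNReal.ofReal_div_of_pos (by positivity), mul_pow, zpow_neg, zpow_ofNat]
        congr 1
        field_simp
        ring
    _ ≤ ENNReal.ofReal (((1 - q) ^ (2 * ℓ + 1) ^ 2 * Real.log (ℓ + 1)) ^ 2) /
          ENNReal.ofReal (16 * q ^ 2 * Real.log (ℓ + 2)) := by
        refine ENNReal.div_le_div (ENNReal.ofReal_le_ofReal (pow_le_pow_left₀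
          (mul_nonneg (Real.exp_pos _).le (by linarith)) ?_ 2))
          (ENNReal.ofReal_le_ofReal (mul_le_mul_of_nonneg_left hupper (by positivity)))
        exact mul_le_mul hoccupied hlower (by linarith) (pow_nonneg (by linarith) _)
    _ ≤ hitTime 2 q := le_hitTime_two hq.le (by linarith) ℓ

end
end
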